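/- For every r ≥ 2 there exists a faithful representation of the free 2-step nilpotent Lie algebra of rank r of dimension 2r - 1 (of type (r-1, 1, r-1)). -/

import Mathlib

/-- The free 2-step nilpotent Lie algebra of rank `r`: `𝕂^r ⊕ Λ²𝕂^r`, where
`Λ²𝕂^r` is modeled by coordinates indexed by pairs `i < j`. -/
abbrev FreeNilp2 (K : Type) [Field K] (r : ℕ) : Type :=
  (Fin r → K) × ({p : Fin r × Fin r // p.1 < p.2} → K)

/-- The wedge `x ∧ y` in coordinates. -/
def wedge {K : Type} [Field K] {r : ℕ} (x y : Fin r → K) :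
    {p : Fin r × Fin r // p.1 < p.2} → K :=
  fun p => x p.1.1 * y p.1.2 - x p.1.2 * y p.1.1

noncomputable instance (K : Type) [Field K] (r : ℕ) : LieRing (FreeNilp2 K r) where
  bracket a b := (0, wedge a.1 b.1)
  add_lie a b c := by
    refine Prod.ext (by simp) (funext fun p => ?_)
    show wedge (a.1 + b.1) c.1 p = wedge a.1 c.1 p + wedge b.1 c.1 p
    simp [wedge]; ring
  lie_add a b c := by
    refine Prod.ext (by simp) (funext fun p => ?_)
    show wedge a.1 (b.1 + c.1) p = wedge a.1 b.1 p + wedge a.1 c.1 p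
    simp [wedge]; ring
  lie_self a := by
    refine Prod.ext (by simp) (funext fun p => ?_)
    show wedge a.1 a.1 p = 0
    simp [wedge]; ring
  leibniz_lie a b c := by
    refine Prod.ext (by simp) (funext fun p => ?_)
    show wedge a.1 (0 : Fin r → K) p =
      wedge (0 : Fin r → K) c.1 p + wedge b.1 (0 : Fin r → K) p
    simp [wedge]

noncomputable instance (K : Type) [Field K] (r : ℕ) : LieAlgebra K (FreeNilp2 K r) where
  lie_smul t a b := by
    refine Prod.ext (by show (0 : Fin r → K) = t • (0 : Fin r → K); simp) (funext fun p => ?_)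
    show wedge a.1 (t • b.1) p = t * wedge a.1 b.1 p
    simp [wedge]; ring

/-- The block index of a basis vector, for block sizes `a, p, b`. -/
def blk {a p b : ℕ} : Fin a ⊕ Fin p ⊕ Fin b → Fin 3
  | Sum.inl _ => 0
  | Sum.inr (Sum.inl _) => 1
  | Sum.inr (Sum.inr _) => 2

/-- A matrix is strictly block upper triangular (blocks of sizes `a, p, b`) if
its only nonzero entries lie in the blocks `(1,2)`, `(1,3)` and `(2,3)`. -/
def StrictBlockUpper {K : Type} [Field K] {a p b : ℕ}
    (M : Matrix (Fin a ⊕ Fin p ⊕ Fin b) (Fin a ⊕ Fin p ⊕ Fin b) K) : Prop :=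
  ∀ i j, ¬ blk i < blk j → M i j = 0

attribute [local instance 100] LieRing.ofAssociativeRing

/-!
Write `r = n + 1`. Send `(x, u)` to the strictly block upper triangular matrix whose
`(1,2)` block is the column `(x₀, …, x_{n-1})`, whose `(2,3)` block is the row `(x₁, …, x_n)`,
and whose `(1,3)` block has entry `(i, j)` equal to the coordinate `u_{i,j+1}` of `e_i ∧ e_{j+1}`
(extended skew-symmetrically). The product of two such matrices lives in the `(1,3)` block,
with entries `x_i y_{j+1}`, so the commutator has entries `x_i y_{j+1} - x_{j+1} y_i`: exactly
the coordinates of `x ∧ y`. Faithfulness holds because every pair `a < b` satisfies `a ≤ n - 1`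
and `b ≥ 1`, so each coordinate `u_{a,b}` appears in the `(1,3)` block, and each `x_k` appears
in the `(1,2)` or `(2,3)` block once `n ≥ 1`.
-/

namespace FreeNilp2

variable {K : Type} [Field K] {r : ℕ}

lemma lie_def (X Y : FreeNilp2 K r) : ⁅X, Y⁆ = (0, wedge X.1 Y.1) :=
  rfl

def skewExtend (u : {p : Fin r × Fin r // p.1 < p.2} → K) (a b : Fin r) : K :=
  if h : a < b then u ⟨(a, b), h⟩ else if h' : b < a then -u ⟨(b, a), h'⟩ else 0

lemma skewExtend_of_lt (u : {p : Fin r × Fin r // p.1 < p.2} → K) {a b : Fin r} (h : a < b) :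
    skewExtend u a b = u ⟨(a, b), h⟩ :=
  dif_pos h

lemma skewExtend_wedge (x y : Fin r → K) (a b : Fin r) :
    skewExtend (wedge x y) a b = x a * y b - x b * y a := by
  rcases lt_trichotomy a b with h | rfl | h
  · exact skewExtend_of_lt _ h
  · simp [skewExtend]
  · simp [skewExtend, h, h.not_gt, wedge]

lemma skewExtend_add (u v : {p : Fin r × Fin r // p.1 < p.2} → K) (a b : Fin r) :
    skewExtend (u + v) a b = skewExtend u a b + skewExtend v a b := by
  unfold skewExtend; split_ifs <;> simp [add_comm]

lemma skewExtend_smul (t : K) (u : {p : Fin r × Fin r // p.1 < p.2} → K) (a b : Fin r) :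
    skewExtend (t • u) a b = t * skewExtend u a b := by
  unfold skewExtend; split_ifs <;> simp

variable (K) (n : ℕ)

def typeMatrix :
    FreeNilp2 K (n + 1) →ₗ[K] Matrix (Fin n ⊕ Fin 1 ⊕ Fin n) (Fin n ⊕ Fin 1 ⊕ Fin n) K where
  toFun X := Matrix.of fun
    | .inl i, .inr (.inl _) => X.1 i.castSucc
    | .inr (.inl _), .inr (.inr j) => X.1 j.succ
    | .inl i, .inr (.inr j) => skewExtend X.2 i.castSucc j.succ
    | _, _ => 0
  map_add' X Y := by
    ext (i | i | i) (j | j | j) <;> simp [skewExtend_add]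
  map_smul' t X := by
    ext (i | i | i) (j | j | j) <;> simp [skewExtend_smul]

variable {K n}

lemma typeMatrix_strictBlockUpper (X : FreeNilp2 K (n + 1)) :
    StrictBlockUpper (typeMatrix K n X) := by
  rintro (i | i | i) (j | j | j) hij <;> first | rfl | simp [blk, Fin.lt_def] at hij

lemma typeMatrix_lie (X Y : FreeNilp2 K (n + 1)) :
    typeMatrix K n ⁅X, Y⁆ = ⁅typeMatrix K n X, typeMatrix K n Y⁆ := by
  rw [Ring.lie_def]
  ext (i | i | i) (j | j | j) <;>
    simp [typeMatrix, lie_def, Matrix.mul_apply, Fintype.sum_sum_type, skewExtend_wedge, mul_comm]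

lemma typeMatrix_injective (hn : 0 < n) : Function.Injective (typeMatrix K n) := by
  refine (injective_iff_map_eq_zero _).mpr fun ⟨x, u⟩ hX => Prod.ext (funext fun k => ?_) ?_
  · rcases Fin.eq_zero_or_eq_succ k with rfl | ⟨j, rfl⟩
    · simpa [typeMatrix] using congr_fun₂ hX (.inl ⟨0, hn⟩) (.inr (.inl 0))
    · simpa [typeMatrix] using congr_fun₂ hX (.inr (.inl 0)) (.inr (.inr j))
  · funext ⟨⟨a, b⟩, hab⟩
    obtain ⟨j, rfl⟩ := Fin.exists_succ_eq.mpr (Fin.ne_zero_of_lt hab)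
    obtain ⟨i, rfl⟩ := Fin.exists_castSucc_eq.mpr (Fin.ne_last_of_lt hab)
    simpa [typeMatrix, skewExtend_of_lt _ hab] using congr_fun₂ hX (.inl i) (.inr (.inr j))

variable (K n)

noncomputable def typeRep :
    FreeNilp2 K (n + 1) →ₗ⁅K⁆ Matrix (Fin n ⊕ Fin 1 ⊕ Fin n) (Fin n ⊕ Fin 1 ⊕ Fin n) K :=
  { typeMatrix K n with map_lie' := typeMatrix_lie _ _ }

end FreeNilp2

theorem exists_faithful_type_r1_general (K : Type) [Field K] (r : ℕ) (hr : 2 ≤ r) :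
    ∃ π : FreeNilp2 K r →ₗ⁅K⁆
        Matrix (Fin (r-1) ⊕ Fin 1 ⊕ Fin (r-1)) (Fin (r-1) ⊕ Fin 1 ⊕ Fin (r-1)) K,
      Function.Injective π ∧ ∀ X : FreeNilp2 K r, StrictBlockUpper (π X) := by
  obtain ⟨n, rfl⟩ : ∃ n, r = n + 1 := ⟨r - 1, by omega⟩
  exact ⟨FreeNilp2.typeRep K n, FreeNilp2.typeMatrix_injective (by omega),
    FreeNilp2.typeMatrix_strictBlockUpper⟩

/-- For every `r ≥ 2` there is a faithful representation of the free 2-step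
nilpotent Lie algebra of rank `r` of dimension `2r - 1`, of type `(r-1, 1, r-1)`. -/
theorem exists_faithful_type_r1 (K : Type) [Field K] [CharZero K] (r : ℕ) (hr : 2 ≤ r) :
    ∃ π : FreeNilp2 K r →ₗ⁅K⁆
        Matrix (Fin (r-1) ⊕ Fin 1 ⊕ Fin (r-1)) (Fin (r-1) ⊕ Fin 1 ⊕ Fin (r-1)) K,
      Function.Injective π ∧ ∀ X : FreeNilp2 K r, StrictBlockUpper (π X) :=
  exists_faithful_type_r1_general K r hr
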